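/- arXiv:1402.4416 — 2 statements merged into one kernel-verified Lean document; each statement's English description precedes it below -/
import Mathlib

section
/- For a measurable $f:\mathbb{R}\to\mathbb{R}$ define $\overline{\alpha_f} := \inf\{\alpha>0 : \limsup_{|x|\to\infty}|f(x)/x^{\alpha}| < \infty\}$ and $\underline{\alpha_f} := \inf\{\alpha>0 : \liminf_{|x|\to\infty}|f(x)/x^{\alpha}| < \infty\}$. Let $f \in C^1(\mathbb{R})$ with $f'(x) > 0$ for all $x$, and suppose $f$ is unbounded above and below (so $f$ is a bijection of $\mathbb{R}$). If $0 < \underline{\alpha_f} < \infty$, then for every $\eta \in (0, \underline{\alpha_f})$ one has $\overline{\alpha_{f^{-1}}} \le \frac{1}{\underline{\alpha_f} - \eta}$, where $f^{-1}$ is the inverse function of $f$. -/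
open Filter

/-- The filter `|x| → ∞` on `ℝ`. -/
def absAtTop : Filter ℝ := Filter.comap (fun x : ℝ => |x|) Filter.atTop

/-- Set of exponents `α > 0` such that `limsup_{|x|→∞} |f(x)/x^α| < ∞`. -/
def upperRateSet (f : ℝ → ℝ) : Set ℝ :=
  {α : ℝ | 0 < α ∧ ∃ C : ℝ, ∀ᶠ x in absAtTop, |f x| ≤ C * |x| ^ α}

/-- Set of exponents `α > 0` such that `liminf_{|x|→∞} |f(x)/x^α| < ∞`. -/
def lowerRateSet (f : ℝ → ℝ) : Set ℝ :=
  {α : ℝ | 0 < α ∧ ∃ C : ℝ, ∃ᶠ x in absAtTop, |f x| ≤ C * |x| ^ α}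

/-- Upper polynomial growth rate `overline{α_f}`. -/
noncomputable def upperRate (f : ℝ → ℝ) : ℝ := sInf (upperRateSet f)

/-- Lower polynomial growth rate `underline{α_f}`. -/
noncomputable def lowerRate (f : ℝ → ℝ) : ℝ := sInf (lowerRateSet f)

lemma eventually_absAtTop {p : ℝ → Prop} :
    (∀ᶠ x in absAtTop, p x) ↔ ∃ M : ℝ, ∀ x, M ≤ |x| → p x := by
  rw [absAtTop, Filter.eventually_comap]
  simp only [Filter.eventually_atTop]
  constructor
  · rintro ⟨M, hM⟩
    exact ⟨M, fun x hx => hM |x| hx x rfl⟩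
  · rintro ⟨M, hM⟩
    exact ⟨M, fun b hb x hx => hM x (hx ▸ hb)⟩

/-- If `f ∈ C¹(ℝ)` with `f' > 0` everywhere, `f` surjective onto `ℝ`, and
`0 < underline{α_f} < ∞`, then for every `η ∈ (0, underline{α_f})` one has
`overline{α_{f⁻¹}} ≤ 1/(underline{α_f} - η)`. -/
theorem stmt6 (f : ℝ → ℝ) (hf : ContDiff ℝ 1 f) (hf' : ∀ x, 0 < deriv f x)
    (hsurj : Function.Surjective f)
    (hfin : (lowerRateSet f).Nonempty) (hpos : 0 < lowerRate f) :
    ∀ η : ℝ, 0 < η → η < lowerRate f →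
      upperRate (Function.invFun f) ≤ 1 / (lowerRate f - η) := by
  intro η hη hηα
  set α := lowerRate f with hα
  set β := α - η with hβdef
  have hβ : 0 < β := sub_pos.2 hηα
  have hmono : StrictMono f := strictMono_of_deriv_pos hf'
  set g := Function.invFun f with hg
  have hri : ∀ y, f (g y) = y := fun y => Function.invFun_eq (hsurj y)
  -- β ∉ lowerRateSet f
  have hnot : β ∉ lowerRateSet f := by
    intro hmem
    have hle : α ≤ β := csInf_le ⟨0, fun b hb => le_of_lt hb.1⟩ hmem
    linarith
  have hfreq : ¬ ∃ᶠ x in absAtTop, |f x| ≤ 1 * |x| ^ β := fun h => hnot ⟨hβ, 1, h⟩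
  have hev : ∀ᶠ x in absAtTop, |x| ^ β < |f x| := by
    filter_upwards [Filter.not_frequently.mp hfreq] with x hx
    have := lt_of_not_ge hx
    linarith [this]
  obtain ⟨M, hM⟩ := eventually_absAtTop.mp hev
  -- membership of 1/β in upperRateSet g
  have hmemU : (1 / β) ∈ upperRateSet g := by
    refine ⟨by positivity, 1, eventually_absAtTop.mpr ?_⟩
    set K := max M 1 with hK
    refine ⟨max |f K| |f (-K)| + 1, fun y hy => ?_⟩
    -- first: K ≤ |g y|
    have hKgy : K ≤ |g y| := by
      rcases le_or_gt 0 y with h0 | h0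
      · have hyy : f K < y := by
          have : |f K| < |y| := by
            have : |f K| ≤ max |f K| |f (-K)| := le_max_left _ _
            linarith
          calc f K ≤ |f K| := le_abs_self _
            _ < |y| := this
            _ = y := abs_of_nonneg h0
        have : K < g y := by
          have := hmono.lt_iff_lt (a := K) (b := g y)
          rw [hri y] at this
          exact this.mp hyy
        calc K ≤ g y := this.le
          _ ≤ |g y| := le_abs_self _
      · have hyy : y < f (-K) := by
          have h1 : |f (-K)| < |y| := by
            have : |f (-K)| ≤ max |f K| |f (-K)| := le_max_right _ _
            linarith
          have h2 : |y| = -y := abs_of_neg h0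
          calc y = -(-y) := by ring
            _ = -|y| := by rw [h2]
            _ < -|f (-K)| := by linarith
            _ ≤ f (-K) := neg_abs_le _
        have hlt : g y < -K := by
          have := hmono.lt_iff_lt (a := g y) (b := -K)
          rw [hri y] at this
          exact this.mp hyy
        calc K ≤ -(g y) := by linarith
          _ ≤ |g y| := neg_le_abs _
    have hMgy : M ≤ |g y| := le_trans (le_max_left _ _) hKgy
    have h1gy : (1 : ℝ) ≤ |g y| := le_trans (le_max_right _ _) hKgy
    have hbound : |g y| ^ β < |f (g y)| := hM (g y) hMgy
    rw [hri y] at hbound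
    have hstep : |g y| ^ β ≤ |y| := hbound.le
    have : (|g y| ^ β) ^ (1 / β) ≤ |y| ^ (1 / β) :=
      Real.rpow_le_rpow (Real.rpow_nonneg (abs_nonneg _) _) hstep (by positivity)
    rw [← Real.rpow_mul (abs_nonneg _), mul_one_div, div_self hβ.ne', Real.rpow_one] at this
    rw [one_mul]
    exact this
  calc upperRate g = sInf (upperRateSet g) := rfl
    _ ≤ 1 / β := csInf_le ⟨0, fun b hb => hb.1.le⟩ hmemU
end

section
/- (Whitney-type counterexample) There exists a differentiable, strictly increasing function $f:\mathbb{R}\to\mathbb{R}$ whose derivative vanishes on a set of positive Lebesgue measure. Consequently, strict monotonicity of a differentiable function does not imply that its derivative is positive Lebesgue-almost everywhere. -/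
/-!
Take a compact set `K ⊆ ℝ` of positive measure with empty interior (inner regularity applied to
the complement of a countable dense set) and let `f x = ∫₀ˣ infDist t K dt`. Then `f` is
differentiable with `f' = infDist · K ≥ 0`, which vanishes exactly on `K`. A monotone function
that is not strictly monotone is constant on some interval, where `f'` would vanish; as `K` has
empty interior, `f` is strictly increasing.
-/

open MeasureTheory Metric

theorem exists_isCompact_interior_eq_empty_measure_pos {X : Type*} [TopologicalSpace X]
    [T2Space X] [TopologicalSpace.SeparableSpace X] [MeasurableSpace X] [BorelSpace X]
    (μ : Measure X) [μ.InnerRegular] [NullSingletonClass μ] (hμ : μ ≠ 0) :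
    ∃ K : Set X, IsCompact K ∧ interior K = ∅ ∧ 0 < μ K := by
  obtain ⟨S, hS_countable, hS_dense⟩ := TopologicalSpace.exists_countable_dense X
  have hSc : 0 < μ Sᶜ := by
    have := measure_add_measure_compl (μ := μ) hS_countable.measurableSet
    rw [hS_countable.measure_zero μ, zero_add] at this
    exact this ▸ Measure.measure_univ_pos.2 hμ
  obtain ⟨K, hKS, hK, hμK⟩ := hS_countable.measurableSet.compl.exists_lt_isCompact hSc
  refine ⟨K, hK, ?_, hμK⟩
  rw [interior_eq_empty_iff_dense_compl]
  exact hS_dense.mono (Set.subset_compl_comm.1 hKS)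

theorem strictMono_of_hasDerivAt_nonneg_of_interior_eq_empty {f f' : ℝ → ℝ}
    (hf : ∀ x, HasDerivAt f (f' x) x) (hf'_nonneg : ∀ x, 0 ≤ f' x)
    (hf'_zero : interior {x | f' x = 0} = ∅) : StrictMono f := by
  have hmono : Monotone f := monotone_of_hasDerivAt_nonneg hf hf'_nonneg
  intro a b hab
  refine (hmono hab.le).lt_of_ne fun hfab => ?_
  have hconst : ∀ x ∈ Set.Icc a b, f x = f a := fun x hx =>
    le_antisymm (hfab ▸ hmono hx.2) (hmono hx.1)
  have hIoo : Set.Ioo a b ⊆ {x | f' x = 0} := fun x hx =>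
    have hloc : f =ᶠ[nhds x] fun _ => f a := Filter.mem_of_superset (Ioo_mem_nhds hx.1 hx.2)
      fun y hy => hconst y (Set.Ioo_subset_Icc_self hy)
    (hf x).unique ((hasDerivAt_const x (f a)).congr_of_eventuallyEq hloc)
  have hIoo_empty := interior_mono hIoo
  rw [hf'_zero, interior_Ioo, Set.subset_empty_iff] at hIoo_empty
  exact (Set.nonempty_Ioo.2 hab).ne_empty hIoo_empty

/-- There exists a differentiable, strictly increasing function `f : ℝ → ℝ` whose
derivative vanishes on a set of positive Lebesgue measure.  In particular, strict
monotonicity of a differentiable function does not imply that its derivative is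
positive Lebesgue-almost everywhere. -/
theorem stmt10 :
    ∃ f : ℝ → ℝ, Differentiable ℝ f ∧ StrictMono f ∧
      0 < volume {x : ℝ | deriv f x = 0} := by
  obtain ⟨K, hK, hK_interior, hK_pos⟩ :=
    exists_isCompact_interior_eq_empty_measure_pos (volume : Measure ℝ) (NeZero.ne _)
  have hK_zero : {x | infDist x K = 0} = K := Set.ext fun x =>
    (hK.isClosed.mem_iff_infDist_zero (nonempty_of_measure_ne_zero hK_pos.ne')).symm
  set f : ℝ → ℝ := fun x => ∫ t in (0 : ℝ)..x, infDist t K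
  have hf : ∀ x, HasDerivAt f (infDist x K) x := fun x =>
    ((continuous_infDist_pt K).integral_hasStrictDerivAt 0 x).hasDerivAt
  refine ⟨f, fun x => (hf x).differentiableAt,
    strictMono_of_hasDerivAt_nonneg_of_interior_eq_empty hf (fun _ => infDist_nonneg)
      (by rwa [hK_zero]), ?_⟩
  simpa only [(hf _).deriv, hK_zero] using hK_pos
end
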